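/- Fix r, h, w ∈ ℕ. For each i ∈ {1,…,r} let α_i, β_i > 0, let μ_{a,i}, σ_{a,i} ∈ ℝ^h and μ_{b,i}, σ_{b,i} ∈ ℝ^w with all σ-entries positive, and set μ_{γ,i} = α_i/β_i and E_i[log γ] = ∫_{(0,∞)} log γ dGamma(α_i, β_i)(γ). Then Σ_{i=1}^{r} ∫_{(0,∞)} [ Σ_{j=1}^{h} KL(N(μ_{a,i,j}, σ_{a,i,j}²) ‖ N(0, γ^{-1})) + Σ_{j=1}^{w} KL(N(μ_{b,i,j}, σ_{b,i,j}²) ‖ N(0, γ^{-1})) ] dGamma(α_i, β_i)(γ) = (1/2) Σ_{i=1}^{r} [ μ_{γ,i}·(‖μ_{a,i}‖₂² + ‖σ_{a,i}‖₂² + ‖μ_{b,i}‖₂² + ‖σ_{b,i}‖₂²) − Σ_{j=1}^{h} log σ_{a,i,j}² − Σ_{j=1}^{w} log σ_{b,i,j}² − (h+w)(1 + E_i[log γ]) ]. In particular, this expectation equals the low-rank loss term ℓ_rank of the paper's Eq. (28) up to an additive constant that does not depend on the Gaussian parameters μ_A, σ_A, μ_B, σ_B. -/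

import Mathlib

open MeasureTheory ProbabilityTheory
open scoped ENNReal NNReal

/- Kullback–Leibler divergence `KL(q‖p)`, valued in `[0,∞]`:
`∫ log (dq/dp) dq` if `q ≪ p` and the log-density is `q`-integrable, and `+∞` otherwise. -/
open Classical in
noncomputable def klDiv {Ω : Type*} [MeasurableSpace Ω] (q p : Measure Ω) : ℝ≥0∞ :=
  if q ≪ p ∧ Integrable (llr q p) q then ENNReal.ofReal (∫ x, llr q p x ∂q) else ⊤

/- `KL(N(μ, σ²) ‖ N(0, γ⁻¹))` as a real number, where `N` is the real Gaussian measure. -/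
noncomputable def gaussKL (μ σ γ : ℝ) : ℝ :=
  (klDiv (gaussianReal μ (Real.toNNReal (σ ^ 2))) (gaussianReal 0 (Real.toNNReal γ⁻¹))).toReal

/-! For `v, u ≠ 0` the log-likelihood ratio of `N(μ, v)` against `N(m, u)` is the quadratic
`(log (u / v) + (x - m)² / u - (x - μ)² / v) / 2`, so its mean under `N(μ, v)` only involves the
first two Gaussian moments. With `u = γ⁻¹` each KL term becomes affine in `γ` and `log γ`,
`(γ (μ² + σ²) - log σ² - log γ - 1) / 2`, and integrating it against `Gamma(α, β)` only needs
`E[γ] = α / β` and the integrability of `γ` and `log γ`; the latter follows from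
`|log γ| ≤ (γ^ε + γ^(-ε)) / ε`. -/

open Real Set

/- For probability measures `klDiv` agrees with `InformationTheory.klDiv`, and Gibbs' inequality
makes the `ENNReal.ofReal` in its definition harmless. -/
lemma toReal_klDiv_eq_integral_llr {Ω : Type*} [MeasurableSpace Ω] {q p : Measure Ω}
    [IsProbabilityMeasure q] [IsProbabilityMeasure p] (hqp : q ≪ p) :
    (klDiv q p).toReal = ∫ x, llr q p x ∂q := by
  have h : klDiv q p = InformationTheory.klDiv q p := by
    simp [klDiv, InformationTheory.klDiv_def]
  rw [h, InformationTheory.toReal_klDiv_of_measure_eq hqp (by simp)]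

namespace ProbabilityTheory

lemma log_gaussianPDFReal (μ : ℝ) {v : ℝ≥0} (hv : v ≠ 0) (x : ℝ) :
    log (gaussianPDFReal μ v x) = -log (2 * π * v) / 2 - (x - μ) ^ 2 / (2 * v) := by
  have : (0 : ℝ) < v := by positivity
  rw [gaussianPDFReal, log_mul (by positivity) (exp_pos _).ne', log_exp, log_inv,
    log_sqrt (by positivity)]
  ring

lemma gaussianReal_absolutelyContinuous_gaussianReal (μ m : ℝ) {v u : ℝ≥0} (hv : v ≠ 0)
    (hu : u ≠ 0) : gaussianReal μ v ≪ gaussianReal m u :=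
  (gaussianReal_absolutelyContinuous μ hv).trans (gaussianReal_absolutelyContinuous' m hu)

lemma llr_gaussianReal (μ m : ℝ) {v u : ℝ≥0} (hv : v ≠ 0) (hu : u ≠ 0) :
    llr (gaussianReal μ v) (gaussianReal m u) =ᵐ[gaussianReal μ v]
      fun x ↦ (log (u / v) + (x - m) ^ 2 / u - (x - μ) ^ 2 / v) / 2 := by
  have hq := gaussianReal_absolutelyContinuous μ hv
  have hp := gaussianReal_absolutelyContinuous m hu
  have hqp := gaussianReal_absolutelyContinuous_gaussianReal μ m hv hu
  filter_upwards [hqp.ae_le (Measure.rnDeriv_eq_div hq hp), hq.ae_le (rnDeriv_gaussianReal μ v),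
    hq.ae_le (rnDeriv_gaussianReal m u)] with x hdiv hpdf_q hpdf_p
  have hv' : (0 : ℝ) < v := by positivity
  have hu' : (0 : ℝ) < u := by positivity
  simp only [llr_def, hdiv, hpdf_q, hpdf_p]
  rw [ENNReal.toReal_div, toReal_gaussianPDF, toReal_gaussianPDF,
    log_div (gaussianPDFReal_pos _ _ _ hv).ne' (gaussianPDFReal_pos _ _ _ hu).ne',
    log_gaussianPDFReal _ hv, log_gaussianPDFReal _ hu, log_div hu'.ne' hv'.ne',
    log_mul (by positivity) hv'.ne', log_mul (by positivity) hu'.ne']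
  field_simp
  ring

lemma integrable_sub_sq_gaussianReal (μ m : ℝ) (v : ℝ≥0) :
    Integrable (fun x ↦ (x - m) ^ 2) (gaussianReal μ v) :=
  ((memLp_id_gaussianReal 2).sub (memLp_const m)).integrable_sq

lemma integral_sub_sq_gaussianReal (μ m : ℝ) (v : ℝ≥0) :
    ∫ x, (x - m) ^ 2 ∂gaussianReal μ v = (μ - m) ^ 2 + v := by
  have hvar : ∫ x, (x - μ) ^ 2 ∂gaussianReal μ v = v := by
    rw [← variance_fun_id_gaussianReal (μ := μ), variance_eq_integral aemeasurable_id',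
      integral_id_gaussianReal]
  have hexpand : (fun x ↦ (x - m) ^ 2) =
      fun x ↦ (x - μ) ^ 2 + (2 * (μ - m) * (x - μ) + (μ - m) ^ 2) := by
    funext x; ring
  have hid : Integrable (fun x ↦ x) (gaussianReal μ v) :=
    (memLp_id_gaussianReal 1).integrable le_rfl
  have hlin : Integrable (fun x ↦ x - μ) (gaussianReal μ v) := hid.sub (integrable_const μ)
  have hmean : ∫ x, (x - μ) ∂gaussianReal μ v = 0 := by
    rw [integral_sub hid (integrable_const μ), integral_id_gaussianReal]
    simp
  have hrest : Integrable (fun x ↦ 2 * (μ - m) * (x - μ) + (μ - m) ^ 2) (gaussianReal μ v) :=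
    (hlin.const_mul _).add (integrable_const _)
  rw [hexpand, integral_add (integrable_sub_sq_gaussianReal μ μ v) hrest,
    integral_add (hlin.const_mul _) (integrable_const _), integral_const_mul, hmean, hvar]
  simp
  ring

lemma integral_llr_gaussianReal (μ m : ℝ) {v u : ℝ≥0} (hv : v ≠ 0) (hu : u ≠ 0) :
    ∫ x, llr (gaussianReal μ v) (gaussianReal m u) x ∂gaussianReal μ v =
      (log (u / v) + ((μ - m) ^ 2 + v) / u - 1) / 2 := by
  have hv' : (0 : ℝ) < v := by positivity
  have hm : Integrable (fun x ↦ log (u / v) + (x - m) ^ 2 / u) (gaussianReal μ v) :=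
    (integrable_const _).add ((integrable_sub_sq_gaussianReal μ m v).div_const _)
  rw [integral_congr_ae (llr_gaussianReal μ m hv hu), integral_div,
    integral_sub hm ((integrable_sub_sq_gaussianReal μ μ v).div_const _),
    integral_add (integrable_const _) ((integrable_sub_sq_gaussianReal μ m v).div_const _),
    integral_const, probReal_univ, one_smul, integral_div, integral_div,
    integral_sub_sq_gaussianReal, integral_sub_sq_gaussianReal]
  field_simp
  ring

end ProbabilityTheory

lemma abs_log_le_rpow_add_rpow_neg_div {x ε : ℝ} (hx : 0 < x) (hε : 0 < ε) :
    |log x| ≤ (x ^ ε + x ^ (-ε)) / ε := by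
  have hpos := rpow_pos_of_pos hx ε
  have hneg := rpow_pos_of_pos hx (-ε)
  rw [abs_le, add_div]
  constructor
  · have h := log_le_rpow_div (inv_pos.mpr hx).le hε
    rw [log_inv, inv_rpow hx.le, ← rpow_neg hx.le] at h
    have : 0 < x ^ ε / ε := by positivity
    linarith
  · have h := log_le_rpow_div hx.le hε
    have : 0 < x ^ (-ε) / ε := by positivity
    linarith

namespace ProbabilityTheory

variable {a r : ℝ}

lemma measurable_gammaPDF (a r : ℝ) : Measurable (gammaPDF a r) :=
  (measurable_gammaPDFReal a r).ennreal_ofReal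

lemma ae_pos_gammaMeasure (a r : ℝ) : ∀ᵐ x ∂gammaMeasure a r, 0 < x := by
  rw [gammaMeasure, ae_withDensity_iff (measurable_gammaPDF a r)]
  filter_upwards [Measure.ae_ne volume 0] with x hx0 hpdf
  by_contra hx
  exact hpdf (gammaPDF_of_neg (lt_of_le_of_ne (not_lt.mp hx) hx0))

lemma gammaPDFReal_mul_ae_eq_indicator (a r : ℝ) (f : ℝ → ℝ) :
    (fun x ↦ gammaPDFReal a r x * f x) =ᵐ[volume]
      (Ioi 0).indicator fun x ↦ r ^ a / Gamma a * (x ^ (a - 1) * exp (-(r * x)) * f x) := by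
  filter_upwards [Measure.ae_ne volume 0] with x hx0
  rcases lt_or_gt_of_ne hx0 with hx | hx
  · simp [gammaPDFReal, hx.not_ge, hx.not_gt]
  · simp only [gammaPDFReal, if_pos hx.le, indicator_of_mem (mem_Ioi.mpr hx)]
    ring

lemma integral_gammaMeasure (ha : 0 < a) (hr : 0 < r) (f : ℝ → ℝ) :
    ∫ x, f x ∂gammaMeasure a r =
      r ^ a / Gamma a * ∫ x in Ioi 0, x ^ (a - 1) * exp (-(r * x)) * f x := by
  rw [gammaMeasure, integral_withDensity_eq_integral_toReal_smul
      (measurable_gammaPDF a r) (ae_of_all _ fun _ ↦ ENNReal.ofReal_lt_top)]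
  simp only [gammaPDF, ENNReal.toReal_ofReal (gammaPDFReal_nonneg ha hr _), smul_eq_mul]
  rw [integral_congr_ae (gammaPDFReal_mul_ae_eq_indicator a r f),
    integral_indicator measurableSet_Ioi, integral_const_mul]

lemma integrable_gammaMeasure_iff (ha : 0 < a) (hr : 0 < r) {f : ℝ → ℝ} :
    Integrable f (gammaMeasure a r) ↔
      IntegrableOn (fun x ↦ x ^ (a - 1) * exp (-(r * x)) * f x) (Ioi 0) := by
  have hc : r ^ a / Gamma a ≠ 0 := (div_pos (rpow_pos_of_pos hr a) (Gamma_pos_of_pos ha)).ne'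
  rw [gammaMeasure, integrable_withDensity_iff (measurable_gammaPDF a r)
      (ae_of_all _ fun _ ↦ ENNReal.ofReal_lt_top)]
  simp only [gammaPDF, ENNReal.toReal_ofReal (gammaPDFReal_nonneg ha hr _), mul_comm (f _)]
  rw [integrable_congr (gammaPDFReal_mul_ae_eq_indicator a r f),
    integrable_indicator_iff measurableSet_Ioi, IntegrableOn,
    integrable_const_mul_iff (isUnit_iff_ne_zero.mpr hc), IntegrableOn]

lemma integrable_rpow_gammaMeasure (ha : 0 < a) (hr : 0 < r) {s : ℝ} (hs : 0 < a + s) :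
    Integrable (fun x ↦ x ^ s) (gammaMeasure a r) := by
  rw [integrable_gammaMeasure_iff ha hr]
  have h := integrableOn_rpow_mul_exp_neg_mul_rpow (s := a + s - 1) (by linarith) one_pos hr
  refine h.congr_fun (fun x hx ↦ ?_) measurableSet_Ioi
  dsimp only
  rw [rpow_one, neg_mul, mul_right_comm, ← rpow_add (mem_Ioi.mp hx)]
  ring_nf

lemma integrable_id_gammaMeasure (ha : 0 < a) (hr : 0 < r) :
    Integrable (fun x ↦ x) (gammaMeasure a r) := by
  simpa using integrable_rpow_gammaMeasure ha hr (s := 1) (by linarith)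

lemma integral_id_gammaMeasure (ha : 0 < a) (hr : 0 < r) :
    ∫ x, x ∂gammaMeasure a r = a / r := by
  have hpow : ∀ x ∈ Ioi (0 : ℝ),
      x ^ (a - 1) * exp (-(r * x)) * x = x ^ (a + 1 - 1) * exp (-(r * x)) := by
    intro x hx
    rw [add_sub_cancel_right, rpow_sub_one (mem_Ioi.mp hx).ne']
    field_simp [(mem_Ioi.mp hx).ne']
  rw [integral_gammaMeasure ha hr, setIntegral_congr_fun measurableSet_Ioi hpow,
    integral_rpow_mul_exp_neg_mul_Ioi (by linarith) hr, Gamma_add_one ha.ne',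
    div_rpow zero_le_one hr.le, one_rpow, rpow_add_one hr.ne']
  have := (Gamma_pos_of_pos ha).ne'
  have := (rpow_pos_of_pos hr a).ne'
  field_simp

lemma integrable_log_gammaMeasure (ha : 0 < a) (hr : 0 < r) :
    Integrable log (gammaMeasure a r) := by
  have hbound :
      Integrable (fun x ↦ (x ^ (a / 2) + x ^ (-(a / 2))) / (a / 2)) (gammaMeasure a r) :=
    ((integrable_rpow_gammaMeasure ha hr (by linarith)).add
      (integrable_rpow_gammaMeasure ha hr (by linarith))).div_const _
  refine hbound.mono' measurable_log.aestronglyMeasurable ?_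
  filter_upwards [ae_pos_gammaMeasure a r] with x hx
  exact abs_log_le_rpow_add_rpow_neg_div hx (half_pos ha)

end ProbabilityTheory

section GaussKL

variable {a r σ : ℝ}

lemma gaussKL_eq (μ : ℝ) {γ : ℝ} (hσ : σ ≠ 0) (hγ : 0 < γ) :
    gaussKL μ σ γ = (γ * (μ ^ 2 + σ ^ 2) - log (σ ^ 2) - log γ - 1) / 2 := by
  have hσ2 : 0 < σ ^ 2 := by positivity
  have hv : (σ ^ 2).toNNReal ≠ 0 := (Real.toNNReal_pos.mpr hσ2).ne'
  have hu : γ⁻¹.toNNReal ≠ 0 := (Real.toNNReal_pos.mpr (inv_pos.mpr hγ)).ne'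
  rw [gaussKL, toReal_klDiv_eq_integral_llr
      (gaussianReal_absolutelyContinuous_gaussianReal μ 0 hv hu),
    integral_llr_gaussianReal μ 0 hv hu, Real.coe_toNNReal _ hσ2.le,
    Real.coe_toNNReal _ (inv_pos.mpr hγ).le, log_div (inv_pos.mpr hγ).ne' hσ2.ne', log_inv]
  field_simp
  ring

lemma gaussKL_ae_eq_gammaMeasure (μ : ℝ) (hσ : σ ≠ 0) :
    (fun γ ↦ gaussKL μ σ γ) =ᵐ[gammaMeasure a r]
      fun γ ↦ (γ * (μ ^ 2 + σ ^ 2) - log (σ ^ 2) - log γ - 1) / 2 := by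
  filter_upwards [ae_pos_gammaMeasure a r] with γ hγ using gaussKL_eq μ hσ hγ

lemma integrable_gaussKL_gammaMeasure (μ : ℝ) (hσ : σ ≠ 0) (ha : 0 < a) (hr : 0 < r) :
    Integrable (fun γ ↦ gaussKL μ σ γ) (gammaMeasure a r) := by
  have := isProbabilityMeasure_gammaMeasure ha hr
  refine (integrable_congr (gaussKL_ae_eq_gammaMeasure μ hσ)).mpr ?_
  exact (((((integrable_id_gammaMeasure ha hr).mul_const _).sub (integrable_const _)).sub
    (integrable_log_gammaMeasure ha hr)).sub (integrable_const _)).div_const _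

lemma integral_gaussKL_gammaMeasure (μ : ℝ) (hσ : σ ≠ 0) (ha : 0 < a) (hr : 0 < r) :
    ∫ γ, gaussKL μ σ γ ∂gammaMeasure a r =
      (a / r * (μ ^ 2 + σ ^ 2) - log (σ ^ 2) - ∫ γ, log γ ∂gammaMeasure a r - 1) / 2 := by
  have := isProbabilityMeasure_gammaMeasure ha hr
  have hlin := (integrable_id_gammaMeasure ha hr).mul_const (μ ^ 2 + σ ^ 2)
  have hlog := integrable_log_gammaMeasure ha hr
  have hlinConst : Integrable (fun γ ↦ γ * (μ ^ 2 + σ ^ 2) - log (σ ^ 2)) (gammaMeasure a r) :=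
    hlin.sub (integrable_const _)
  have hlinLog : Integrable (fun γ ↦ γ * (μ ^ 2 + σ ^ 2) - log (σ ^ 2) - log γ)
      (gammaMeasure a r) := hlinConst.sub hlog
  rw [integral_congr_ae (gaussKL_ae_eq_gammaMeasure μ hσ), integral_div,
    integral_sub hlinLog (integrable_const _), integral_sub hlinConst hlog,
    integral_sub hlin (integrable_const _),
    integral_mul_const, integral_id_gammaMeasure ha hr]
  simp

end GaussKL

/-- Closed form of the low-rank loss `ℓ_rank` (Eq. 28 of the paper): with
`q(a_i) = ⊗_j N(μ_{a,i,j}, σ_{a,i,j}²)`, `q(b_i) = ⊗_j N(μ_{b,i,j}, σ_{b,i,j}²)`,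
`p(a_i|γ) = N(0, γ⁻¹I_h)`, `p(b_i|γ) = N(0, γ⁻¹I_w)` and `q(γ_i) = Gamma(α_i, β_i)`,
the expected KL `E_{q(γ)}[KL(q(A)q(B) ‖ p(A|γ)p(B|γ))]` equals
`½ Σ_i [ (α_i/β_i)(‖μ_{a,i}‖² + ‖σ_{a,i}‖² + ‖μ_{b,i}‖² + ‖σ_{b,i}‖²)`
`− Σ_j log σ_{a,i,j}² − Σ_j log σ_{b,i,j}² − (h+w)(1 + E_i[log γ]) ]`. -/
theorem expected_kl_rank_closed_form {r h w : ℕ} (α β : Fin r → ℝ)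
    (hα : ∀ i, 0 < α i) (hβ : ∀ i, 0 < β i)
    (μa σa : Fin r → Fin h → ℝ) (μb σb : Fin r → Fin w → ℝ)
    (hσa : ∀ i j, 0 < σa i j) (hσb : ∀ i j, 0 < σb i j) :
    (∑ i, ∫ γ, ((∑ j, gaussKL (μa i j) (σa i j) γ) + ∑ j, gaussKL (μb i j) (σb i j) γ)
        ∂gammaMeasure (α i) (β i)) =
      (1 / 2) * ∑ i,
        ((α i / β i) *
            ((∑ j, μa i j ^ 2) + (∑ j, σa i j ^ 2) + (∑ j, μb i j ^ 2) + ∑ j, σb i j ^ 2)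
          - (∑ j, Real.log (σa i j ^ 2)) - (∑ j, Real.log (σb i j ^ 2))
          - ((h : ℝ) + (w : ℝ)) * (1 + ∫ γ, Real.log γ ∂gammaMeasure (α i) (β i))) := by
  rw [Finset.mul_sum]
  refine Finset.sum_congr rfl fun i _ ↦ ?_
  have hintA := fun j ↦ integrable_gaussKL_gammaMeasure (μa i j) (hσa i j).ne' (hα i) (hβ i)
  have hintB := fun j ↦ integrable_gaussKL_gammaMeasure (μb i j) (hσb i j).ne' (hα i) (hβ i)
  rw [integral_add (integrable_finsetSum _ fun j _ ↦ hintA j)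
      (integrable_finsetSum _ fun j _ ↦ hintB j),
    integral_finsetSum _ fun j _ ↦ hintA j, integral_finsetSum _ fun j _ ↦ hintB j]
  simp only [integral_gaussKL_gammaMeasure _ (hσa i _).ne' (hα i) (hβ i),
    integral_gaussKL_gammaMeasure _ (hσb i _).ne' (hα i) (hβ i), ← Finset.sum_div,
    Finset.sum_sub_distrib, ← Finset.mul_sum, Finset.sum_add_distrib, Finset.sum_const,
    Finset.card_univ, Fintype.card_fin, nsmul_eq_mul]
  ring
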